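/- Let τ_m > 0 and let z be a complex number with Im(z) > 0. Then (1/√π)·∫_0^{∞} ( ∑_{k∈ℤ} exp(−(τ + 2kτ_m)²/4) )·exp(izτ) dτ = i/(τ_m·z) − 2i·τ_m·z·∑_{n=1}^{∞} exp(−n²π²/τ_m²)/(n²π² − τ_m²z²), where the series on the right converges absolutely. Equivalently, with h = π/τ_m, the right-hand side equals i·h/(π·z) − i·(2h·z/π)·∑_{n=1}^{∞} exp(−n²h²)/(n²h² − z²). -/

import Mathlib

/-!
By Poisson summation (the theta transformation formula), the periodized Gaussian is the Fourier
series `(√π / τm) ∑_{n ∈ ℤ} exp(-n²h²) exp(-i n h τ)` with `h = π / τm`. Its coefficients decay fast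
enough to integrate term by term against `exp(izτ)` on `[0, ∞)`, and the mode `exp(-i n h τ)`
contributes `i / (z - n h)`. Pairing `n` with `-n` turns `i / (z - nh) + i / (z + nh)` into
`-2iz / (n²h² - z²)`, and `n = 0` gives the leading term `i / z`.
-/

open Real MeasureTheory Complex Set

noncomputable def periodizedGaussian (T τ : ℝ) : ℝ := ∑' k : ℤ, rexp (-(τ + 2 * k * T) ^ 2 / 4)

lemma periodizedGaussian_eq_tsum_fourier {T : ℝ} (hT : 0 < T) (τ : ℝ) :
    (periodizedGaussian T τ : ℂ) = (√π / T : ℝ) *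
      ∑' n : ℤ, (rexp (-(n * (π / T)) ^ 2) : ℂ) * cexp (-(I * (n * (π / T) : ℝ) * τ)) := by
  have hT' : (T : ℂ) ≠ 0 := ofReal_ne_zero.mpr hT.ne'
  have hπ : (π : ℂ) ≠ 0 := ofReal_ne_zero.mpr pi_ne_zero
  have ha : 0 < ((π / T ^ 2 : ℝ) : ℂ).re := by simp only [ofReal_re]; positivity
  have hsqrt : ((π / T ^ 2 : ℝ) : ℂ) ^ (1 / 2 : ℂ) = (√π / T : ℝ) := by
    rw [show (1 / 2 : ℂ) = ((1 / 2 : ℝ) : ℂ) by norm_num, ← ofReal_cpow (by positivity),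
      ← sqrt_eq_rpow, sqrt_div pi_pos.le, sqrt_sq hT.le]
  have poisson := Complex.tsum_exp_neg_quadratic ha (-I * τ / (2 * T))
  rw [hsqrt] at poisson
  have hfourier : ∀ n : ℤ,
      cexp (-π * ((π / T ^ 2 : ℝ) : ℂ) * n ^ 2 + 2 * π * (-I * τ / (2 * T)) * n) =
        (rexp (-(n * (π / T)) ^ 2) : ℂ) * cexp (-(I * (n * (π / T) : ℝ) * τ)) := by
    intro n
    rw [ofReal_exp, ← Complex.exp_add]
    congr 1
    push_cast
    field_simp
  have hgauss : ∀ n : ℤ,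
      cexp (-π / ((π / T ^ 2 : ℝ) : ℂ) * (n + I * (-I * τ / (2 * T))) ^ 2) =
        (rexp (-(τ + 2 * n * T) ^ 2 / 4) : ℂ) := by
    intro n
    rw [ofReal_exp, ← mul_div_assoc, ← mul_assoc, mul_neg, I_mul_I, neg_neg, one_mul]
    congr 1
    push_cast
    field_simp
    ring
  simp only [hfourier, hgauss] at poisson
  have hc : ((√π / T : ℝ) : ℂ) ≠ 0 := ofReal_ne_zero.mpr (by positivity)
  rw [periodizedGaussian, ofReal_tsum, poisson, ← mul_assoc, mul_one_div_cancel hc, one_mul]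

lemma integral_Ioi_cexp_I_mul {w : ℂ} (hw : 0 < w.im) :
    ∫ τ in Ioi (0 : ℝ), cexp (I * w * τ) = I / w := by
  have hw0 : w ≠ 0 := fun h ↦ by simp [h] at hw
  rw [integral_exp_mul_complex_Ioi (by simpa using hw)]
  field_simp
  simp

lemma integral_Ioi_tsum_mul_cexp {ι : Type*} [Countable ι] {a : ι → ℂ}
    (ha : Summable (‖a ·‖)) (r : ι → ℝ) {z : ℂ} (hz : 0 < z.im) :
    ∫ τ in Ioi (0 : ℝ), ∑' i, a i * cexp (I * (z - r i) * τ) =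
      ∑' i, a i * (I / (z - r i)) := by
  have him : ∀ i, 0 < (z - r i).im := fun i ↦ by simpa using hz
  have hnorm : ∀ i (τ : ℝ), ‖a i * cexp (I * (z - r i) * τ)‖ = ‖a i‖ * rexp (-z.im * τ) := by
    intro i τ
    simp [Complex.norm_exp, Complex.mul_re]
  rw [← integral_tsum_of_summable_integral_norm]
  · simp_rw [integral_const_mul, integral_Ioi_cexp_I_mul (him _)]
  · exact fun i ↦ (integrableOn_exp_mul_complex_Ioi (by simpa using him i) 0).const_mul _
  · simp_rw [hnorm, integral_const_mul, integral_exp_mul_Ioi (neg_lt_zero.mpr hz)]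
    exact ha.mul_right _

lemma tsum_int_eq_zero_add_tsum_add_neg {G : Type*} [AddCommGroup G] [UniformSpace G]
    [IsUniformAddGroup G] [CompleteSpace G] [T2Space G] {f : ℤ → G} (hf : Summable f) :
    ∑' n, f n = f 0 + ∑' n : ℕ, (f (n + 1) + f (-(n + 1))) := by
  have hpos : Summable fun n : ℕ ↦ f (n + 1) :=
    hf.comp_injective fun m n hmn ↦ by simpa using hmn
  have hneg : Summable fun n : ℕ ↦ f (-(n + 1)) :=
    hf.comp_injective fun m n hmn ↦ by simpa using hmn
  rw [tsum_of_add_one_of_neg_add_one hpos hneg, hpos.tsum_add hneg]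
  abel

lemma summable_exp_neg_mul_sq {h : ℝ} (hh : h ≠ 0) : Summable fun n : ℤ ↦ rexp (-(n * h) ^ 2) := by
  convert summable_pow_mul_jacobiTheta₂_term_bound 0 (div_pos (pow_pos (abs_pos.mpr hh) 2) pi_pos) 0
    using 2 with n
  field_simp
  simp

lemma norm_inv_sub_ofReal_le {z : ℂ} (hz : 0 < z.im) (r : ℝ) : ‖(z - r)⁻¹‖ ≤ z.im⁻¹ := by
  rw [norm_inv]
  apply inv_anti₀ hz
  simpa [abs_of_pos hz] using Complex.abs_im_le_norm (z - r)

lemma I_div_sub_add_I_div_add {z : ℂ} (hz : 0 < z.im) (r : ℝ) :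
    I / (z - r) + I / (z + r) = -(2 * I * z) / (r ^ 2 - z ^ 2) := by
  have h₁ : z - r ≠ 0 := fun h ↦ hz.ne' (by simpa using congrArg Complex.im h)
  have h₂ : z + r ≠ 0 := fun h ↦ hz.ne' (by simpa using congrArg Complex.im h)
  have h₃ : (r : ℂ) ^ 2 - z ^ 2 ≠ 0 := by
    rw [show (r : ℂ) ^ 2 - z ^ 2 = -((z - r) * (z + r)) by ring]
    exact neg_ne_zero.mpr (mul_ne_zero h₁ h₂)
  field_simp
  ring

/-- The `(n + 1)`-st term of the Chiarella–Reichel series, so that the sum runs over `n : ℕ`. -/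
noncomputable def chiarellaReichelTerm (h : ℝ) (z : ℂ) (n : ℕ) : ℂ :=
  cexp (-((n : ℂ) + 1) ^ 2 * (h : ℂ) ^ 2) / (((n : ℂ) + 1) ^ 2 * (h : ℂ) ^ 2 - z ^ 2)

noncomputable def fourierLaplaceCoeff (h : ℝ) (z : ℂ) (n : ℤ) : ℂ :=
  rexp (-(n * h) ^ 2) * (I / (z - (n * h : ℝ)))

section

variable {h : ℝ} {z : ℂ}

lemma summable_norm_fourierLaplaceCoeff (hh : h ≠ 0) (hz : 0 < z.im) :
    Summable (‖fourierLaplaceCoeff h z ·‖) := by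
  refine .of_nonneg_of_le (fun _ ↦ norm_nonneg _) (fun n ↦ ?_)
    ((summable_exp_neg_mul_sq hh).mul_right z.im⁻¹)
  rw [fourierLaplaceCoeff, norm_mul, norm_real, norm_of_nonneg (exp_pos _).le, div_eq_mul_inv,
    norm_mul, norm_I, one_mul]
  exact mul_le_mul_of_nonneg_left (norm_inv_sub_ofReal_le hz _) (exp_pos _).le

lemma fourierLaplaceCoeff_zero : fourierLaplaceCoeff h z 0 = I / z := by
  simp [fourierLaplaceCoeff]

lemma fourierLaplaceCoeff_add_neg (hz : 0 < z.im) (n : ℕ) :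
    fourierLaplaceCoeff h z (n + 1) + fourierLaplaceCoeff h z (-(n + 1)) =
      -(2 * I * z) * chiarellaReichelTerm h z n := by
  have hpair := I_div_sub_add_I_div_add hz ((n + 1) * h)
  simp only [fourierLaplaceCoeff, chiarellaReichelTerm]
  push_cast at hpair ⊢
  rw [neg_mul ((n : ℂ) + 1) (h : ℂ), neg_sq, sub_neg_eq_add, ← mul_add, hpair]
  ring_nf

lemma summable_norm_chiarellaReichelTerm (hh : h ≠ 0) (hz : 0 < z.im) :
    Summable (‖chiarellaReichelTerm h z ·‖) := by
  have hf := summable_norm_fourierLaplaceCoeff hh hz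
  have hpos : Summable fun n : ℕ ↦ ‖fourierLaplaceCoeff h z (n + 1)‖ :=
    hf.comp_injective fun m n hmn ↦ by simpa using hmn
  have hneg : Summable fun n : ℕ ↦ ‖fourierLaplaceCoeff h z (-(n + 1))‖ :=
    hf.comp_injective fun m n hmn ↦ by simpa using hmn
  have hpair : Summable fun n : ℕ ↦
      ‖fourierLaplaceCoeff h z (n + 1) + fourierLaplaceCoeff h z (-(n + 1))‖ :=
    .of_nonneg_of_le (fun _ ↦ norm_nonneg _) (fun _ ↦ norm_add_le _ _) (hpos.add hneg)
  have hz0 : ‖2 * I * z‖ ≠ 0 := by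
    simpa using fun h ↦ hz.ne' (by simp [h])
  refine (hpair.mul_left ‖2 * I * z‖⁻¹).congr fun n ↦ ?_
  rw [fourierLaplaceCoeff_add_neg hz, norm_mul (-(2 * I * z)), norm_neg, inv_mul_cancel_left₀ hz0]

lemma tsum_fourierLaplaceCoeff (hh : h ≠ 0) (hz : 0 < z.im) :
    ∑' n, fourierLaplaceCoeff h z n = I / z - 2 * I * z * ∑' n, chiarellaReichelTerm h z n := by
  rw [tsum_int_eq_zero_add_tsum_add_neg (summable_norm_fourierLaplaceCoeff hh hz).of_norm,
    fourierLaplaceCoeff_zero]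
  simp_rw [fourierLaplaceCoeff_add_neg hz, tsum_mul_left]
  ring

end

lemma integral_periodizedGaussian_mul_cexp {T : ℝ} (hT : 0 < T) {z : ℂ} (hz : 0 < z.im) :
    (1 / (√π : ℂ)) * ∫ τ in Ioi (0 : ℝ), (periodizedGaussian T τ : ℂ) * cexp (I * z * τ) =
      (1 / T) * ∑' n, fourierLaplaceCoeff (π / T) z n := by
  have hcoeff : Summable fun n : ℤ ↦ ‖(rexp (-(n * (π / T)) ^ 2) : ℂ)‖ := by
    refine (summable_exp_neg_mul_sq (by positivity : π / T ≠ 0)).congr fun n ↦ ?_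
    rw [norm_real, norm_of_nonneg (exp_pos _).le]
  have hpt : ∀ τ : ℝ, (periodizedGaussian T τ : ℂ) * cexp (I * z * τ) = (√π / T : ℝ) *
      ∑' n : ℤ, (rexp (-(n * (π / T)) ^ 2) : ℂ) * cexp (I * (z - (n * (π / T) : ℝ)) * τ) := by
    intro τ
    rw [periodizedGaussian_eq_tsum_fourier hT, mul_assoc, ← tsum_mul_right]
    refine congrArg _ (tsum_congr fun n ↦ ?_)
    rw [mul_assoc, ← Complex.exp_add]
    ring_nf
  simp_rw [hpt, integral_const_mul, integral_Ioi_tsum_mul_cexp hcoeff _ hz]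
  have hsqrt : (√π : ℂ) ≠ 0 := ofReal_ne_zero.mpr (by positivity)
  rw [← mul_assoc]
  congr 1
  push_cast
  field_simp

lemma chiarellaReichelTerm_div_sq {T : ℝ} (hT : T ≠ 0) (a : ℝ) (z : ℂ) (n : ℕ) :
    chiarellaReichelTerm (a / T) z n / (T : ℂ) ^ 2 =
      cexp (-((n : ℂ) + 1) ^ 2 * (a : ℂ) ^ 2 / (T : ℂ) ^ 2) /
        (((n : ℂ) + 1) ^ 2 * (a : ℂ) ^ 2 - (T : ℂ) ^ 2 * z ^ 2) := by
  have hT' : (T : ℂ) ≠ 0 := ofReal_ne_zero.mpr hT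
  rw [chiarellaReichelTerm, div_div]
  push_cast
  congr 2 <;> field_simp

/-- For `τm > 0` and `z : ℂ` with `Im z > 0`,
`(1/√π)·∫_0^∞ (∑_{k∈ℤ} exp(−(τ + 2kτm)²/4))·exp(izτ) dτ
  = i/(τm z) − 2i·τm·z·∑_{n=1}^∞ exp(−n²π²/τm²)/(n²π² − τm²z²)`,
where the series converges absolutely; equivalently, with `h = π/τm`, the right-hand side
equals `i·h/(π·z) − i·(2h·z/π)·∑_{n=1}^∞ exp(−n²h²)/(n²h² − z²)`. -/
theorem chiarella_reichel_exact (τm : ℝ) (hτm : 0 < τm) (z : ℂ) (hz : 0 < z.im)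
    (h : ℝ) (hh : h = π / τm) :
    Summable (fun n : ℕ =>
      ‖Complex.exp (-((n : ℂ) + 1) ^ 2 * (π : ℂ) ^ 2 / (τm : ℂ) ^ 2) /
        (((n : ℂ) + 1) ^ 2 * (π : ℂ) ^ 2 - (τm : ℂ) ^ 2 * z ^ 2)‖) ∧
    (1 / (Real.sqrt π : ℂ)) *
      ∫ τ in Set.Ioi (0:ℝ),
        ((∑' k : ℤ, Real.exp (-(τ + 2 * k * τm) ^ 2 / 4) : ℝ) : ℂ) *
          Complex.exp (Complex.I * z * τ) =
      Complex.I / ((τm : ℂ) * z) -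
        2 * Complex.I * (τm : ℂ) * z *
          ∑' n : ℕ,
            Complex.exp (-((n : ℂ) + 1) ^ 2 * (π : ℂ) ^ 2 / (τm : ℂ) ^ 2) /
              (((n : ℂ) + 1) ^ 2 * (π : ℂ) ^ 2 - (τm : ℂ) ^ 2 * z ^ 2) ∧
    Complex.I / ((τm : ℂ) * z) -
        2 * Complex.I * (τm : ℂ) * z *
          ∑' n : ℕ,
            Complex.exp (-((n : ℂ) + 1) ^ 2 * (π : ℂ) ^ 2 / (τm : ℂ) ^ 2) /
              (((n : ℂ) + 1) ^ 2 * (π : ℂ) ^ 2 - (τm : ℂ) ^ 2 * z ^ 2) =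
      Complex.I * (h : ℂ) / ((π : ℂ) * z) -
        Complex.I * (2 * (h : ℂ) * z / (π : ℂ)) *
          ∑' n : ℕ,
            Complex.exp (-((n : ℂ) + 1) ^ 2 * (h : ℂ) ^ 2) /
              (((n : ℂ) + 1) ^ 2 * (h : ℂ) ^ 2 - z ^ 2) := by
  subst hh
  have hh : π / τm ≠ 0 := by positivity
  have hintegral := integral_periodizedGaussian_mul_cexp hτm hz
  unfold periodizedGaussian at hintegral
  simp only [← chiarellaReichelTerm_div_sq hτm.ne', tsum_div_const]
  change _ ∧ _ ∧ _ = _ - _ * ∑' n, chiarellaReichelTerm (π / τm) z n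
  refine ⟨?_, ?_, ?_⟩
  · simpa [norm_div] using (summable_norm_chiarellaReichelTerm hh hz).div_const (τm ^ 2)
  · rw [hintegral, tsum_fourierLaplaceCoeff hh hz]
    field_simp
  · push_cast
    field_simp
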